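/- arXiv:1701.04364 — 4 statements merged into one kernel-verified Lean document; each statement's English description precedes it below -/
import Mathlib

section
/- Let X be a random variable on {0,1}^n with Shannon entropy H(X) ≥ n − Δ, and let ε > 0. Then there exist k+1 distributions μ_0, μ_1, ..., μ_k on {0,1}^n with k = O(n/ε), together with probabilities p_0, ..., p_k summing to 1, such that the distribution of X equals ∑_i p_i · μ_i, p_0 = O(ε), and for every i ≥ 1: (1) log₂|supp(μ_i)| ≥ n − Δ/ε − log(Θ(n/ε)), and (2) the total variation distance between μ_i and the uniform distribution on supp(μ_i) is O(ε). -/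
open Finset
open scoped Classical

/-- Shannon entropy (base 2) of a distribution on a finite type. -/
noncomputable def ent {Ω : Type*} [Fintype Ω] (p : Ω → ℝ) : ℝ :=
  - ∑ x, p x * Real.logb 2 (p x)

/-- Total variation distance between two distributions on a finite type. -/
noncomputable def tvDist {Ω : Type*} [Fintype Ω] (p q : Ω → ℝ) : ℝ :=
  (∑ x, |p x - q x|) / 2

/-!
Sort `D` decreasingly and write it as a layer cake: a mixture of the uniform distributions on
the sets of the `t + 1` heaviest points. Group the layers by size into the buckets
`[β (1 + ε) ^ (j - 1), β (1 + ε) ^ j)`, with `β = 2 ^ (n - Δ / ε) ε / 4n`; there are `O(n / ε)`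
of them. The layers of one bucket are nested and of comparable size, so their mixture is
supported on the largest one and is `ε`-close to uniform on it. The layers smaller than `β`
all lie inside the `β` heaviest points, which carry at most `ε` beyond the mass of the points
heavier than `ε / β`; and by Gibbs' inequality, entropy at least `n - Δ` leaves at most `ε` of
mass on those heavy points.
-/

namespace NearUniform

section Uniform

variable {Ω : Type*}

noncomputable def unifOn (S : Finset Ω) (x : Ω) : ℝ :=
  if x ∈ S then (#S : ℝ)⁻¹ else 0

lemma unifOn_of_mem {S : Finset Ω} {x : Ω} (hx : x ∈ S) : unifOn S x = (#S : ℝ)⁻¹ :=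
  if_pos hx

lemma unifOn_of_notMem {S : Finset Ω} {x : Ω} (hx : x ∉ S) : unifOn S x = 0 :=
  if_neg hx

lemma unifOn_nonneg (S : Finset Ω) (x : Ω) : 0 ≤ unifOn S x := by
  unfold unifOn; split_ifs <;> positivity

lemma support_unifOn (S : Finset Ω) : Function.support (unifOn S) = S := by
  ext x
  by_cases hx : x ∈ S
  · have : (0 : ℝ) < #S := by exact_mod_cast Finset.card_pos.mpr ⟨x, hx⟩
    simp [unifOn, hx, this.ne']
  · simp [unifOn, hx]

lemma sum_unifOn_of_subset {S T : Finset Ω} (hST : S ⊆ T) :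
    ∑ x ∈ S, unifOn T x = #S / #T := by
  rw [Finset.sum_congr rfl fun x hx => unifOn_of_mem (hST hx), Finset.sum_const, nsmul_eq_mul,
    div_eq_mul_inv]

lemma sum_unifOn_of_superset {S T : Finset Ω} (hS : S.Nonempty) (hST : S ⊆ T) :
    ∑ x ∈ T, unifOn S x = 1 := by
  rw [← Finset.sum_subset hST fun x _ hx => unifOn_of_notMem hx, sum_unifOn_of_subset le_rfl,
    div_self (by exact_mod_cast hS.card_pos.ne')]

variable [Fintype Ω]

lemma sum_unifOn {S : Finset Ω} (hS : S.Nonempty) : ∑ x, unifOn S x = 1 :=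
  sum_unifOn_of_superset hS (subset_univ S)

lemma tvDist_unifOn_of_subset {S T : Finset Ω} (hST : S ⊆ T) (hS : S.Nonempty) :
    tvDist (unifOn S) (unifOn T) = 1 - #S / #T := by
  have hpt : ∀ x, |unifOn S x - unifOn T x| =
      unifOn S x - unifOn T x + 2 * (unifOn T x - if x ∈ S then unifOn T x else 0) := by
    intro x
    by_cases hx : x ∈ S
    · have hle : unifOn T x ≤ unifOn S x := by
        rw [unifOn_of_mem hx, unifOn_of_mem (hST hx)]
        exact inv_anti₀ (by exact_mod_cast hS.card_pos) (by exact_mod_cast card_le_card hST)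
      rw [if_pos hx, abs_of_nonneg (sub_nonneg.mpr hle)]
      ring
    · rw [if_neg hx, unifOn_of_notMem hx, zero_sub, abs_neg, abs_of_nonneg (unifOn_nonneg T x)]
      ring
  unfold tvDist
  simp only [hpt, Finset.sum_add_distrib, ← Finset.mul_sum, Finset.sum_sub_distrib,
    Finset.sum_ite_mem, Finset.univ_inter, sum_unifOn hS, sum_unifOn (hS.mono hST),
    sum_unifOn_of_subset hST]
  ring

end Uniform

section Mixture

variable {ι κ Ω : Type*}

lemma tvDist_mixture_le [Fintype Ω] {s : Finset ι} {c : ι → ℝ} {ν : ι → Ω → ℝ} {ρ : Ω → ℝ}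
    {δ : ℝ} (hc : ∀ t ∈ s, 0 ≤ c t) (hc1 : ∑ t ∈ s, c t = 1)
    (hν : ∀ t ∈ s, c t ≠ 0 → tvDist (ν t) ρ ≤ δ) :
    tvDist (fun x => ∑ t ∈ s, c t * ν t x) ρ ≤ δ := by
  have hpt : ∀ x, |∑ t ∈ s, c t * ν t x - ρ x| ≤ ∑ t ∈ s, c t * |ν t x - ρ x| := by
    intro x
    calc |∑ t ∈ s, c t * ν t x - ρ x| = |∑ t ∈ s, c t * (ν t x - ρ x)| := by
          simp only [mul_sub, Finset.sum_sub_distrib, ← Finset.sum_mul, hc1, one_mul]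
      _ ≤ ∑ t ∈ s, |c t * (ν t x - ρ x)| := Finset.abs_sum_le_sum_abs _ _
      _ = _ := Finset.sum_congr rfl fun t ht => by rw [abs_mul, abs_of_nonneg (hc t ht)]
  have hterm : ∀ t ∈ s, c t * tvDist (ν t) ρ ≤ c t * δ := by
    intro t ht
    by_cases h : c t = 0
    · simp [h]
    · exact mul_le_mul_of_nonneg_left (hν t ht h) (hc t ht)
  calc tvDist (fun x => ∑ t ∈ s, c t * ν t x) ρ
      ≤ (∑ x, ∑ t ∈ s, c t * |ν t x - ρ x|) / 2 :=
        div_le_div_of_nonneg_right (Finset.sum_le_sum fun x _ => hpt x) zero_le_two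
    _ = ∑ t ∈ s, c t * tvDist (ν t) ρ := by
        rw [Finset.sum_comm]
        simp only [tvDist, Finset.mul_sum, Finset.sum_div, mul_div_assoc]
    _ ≤ ∑ t ∈ s, c t * δ := Finset.sum_le_sum hterm
    _ = δ := by rw [← Finset.sum_mul, hc1, one_mul]

lemma sum_mixture [Fintype Ω] {s : Finset ι} {w : ι → ℝ} {u : ι → Ω → ℝ}
    (hu : ∀ t ∈ s, ∑ x, u t x = 1) : ∑ x, ∑ t ∈ s, w t * u t x = ∑ t ∈ s, w t := by
  rw [Finset.sum_comm]
  exact Finset.sum_congr rfl fun t ht => by rw [← Finset.mul_sum, hu t ht, mul_one]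

variable [Fintype ι] [DecidableEq κ] {w : ι → ℝ} {u : ι → Ω → ℝ}

lemma sum_weight_le_of_mass_eq_one {D : Ω → ℝ} (hD : ∀ x, D x = ∑ t, w t * u t x)
    (hw : ∀ t, 0 ≤ w t) (hu : ∀ t x, 0 ≤ u t x) {s : Finset ι} {S : Finset Ω}
    (hS : ∀ t ∈ s, ∑ x ∈ S, u t x = 1) : ∑ t ∈ s, w t ≤ ∑ x ∈ S, D x :=
  calc ∑ t ∈ s, w t = ∑ x ∈ S, ∑ t ∈ s, w t * u t x := by
        rw [Finset.sum_comm]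
        exact Finset.sum_congr rfl fun t ht => by rw [← Finset.mul_sum, hS t ht, mul_one]
    _ ≤ ∑ x ∈ S, D x := Finset.sum_le_sum fun x _ => (hD x).symm ▸
        Finset.sum_le_sum_of_subset_of_nonneg (subset_univ s)
          fun t _ _ => mul_nonneg (hw t) (hu t x)

noncomputable def fiberWeight (w : ι → ℝ) (g : ι → κ) (i : κ) : ℝ := ∑ t with g t = i, w t

noncomputable def fiberMix (w : ι → ℝ) (u : ι → Ω → ℝ) (g : ι → κ) (ν : Ω → ℝ) (i : κ) :
    Ω → ℝ :=
  if fiberWeight w g i = 0 then ν else fun x => ∑ t with g t = i, w t / fiberWeight w g i * u t x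

variable {g : ι → κ} {ν : Ω → ℝ}

lemma fiberWeight_nonneg (hw : ∀ t, 0 ≤ w t) (i : κ) : 0 ≤ fiberWeight w g i :=
  Finset.sum_nonneg fun t _ => hw t

lemma sum_fiberWeight [Fintype κ] : ∑ i, fiberWeight w g i = ∑ t, w t :=
  Finset.sum_fiberwise _ _ _

lemma fiberMix_nonneg (hw : ∀ t, 0 ≤ w t) (hu : ∀ t x, 0 ≤ u t x) (hν : ∀ x, 0 ≤ ν x)
    (i : κ) (x : Ω) : 0 ≤ fiberMix w u g ν i x := by
  unfold fiberMix
  split_ifs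
  · exact hν x
  · exact Finset.sum_nonneg fun t _ =>
      mul_nonneg (div_nonneg (hw t) (fiberWeight_nonneg hw i)) (hu t x)

lemma sum_fiberMix [Fintype Ω] (hu : ∀ t, ∑ x, u t x = 1) (hν : ∑ x, ν x = 1) (i : κ) :
    ∑ x, fiberMix w u g ν i x = 1 := by
  unfold fiberMix
  split_ifs with h
  · exact hν
  · rw [sum_mixture fun t _ => hu t, ← Finset.sum_div]
    exact div_self h

lemma fiberWeight_mul_fiberMix (hw : ∀ t, 0 ≤ w t) (i : κ) (x : Ω) :
    fiberWeight w g i * fiberMix w u g ν i x = ∑ t with g t = i, w t * u t x := by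
  unfold fiberMix
  split_ifs with h
  · have hzero := (Finset.sum_eq_zero_iff_of_nonneg fun t _ => hw t).mp h
    rw [h, zero_mul]
    exact (Finset.sum_eq_zero fun t ht => by rw [hzero t ht, zero_mul]).symm
  · rw [Finset.mul_sum]
    exact Finset.sum_congr rfl fun t _ => by field_simp

lemma sum_fiberWeight_mul_fiberMix [Fintype κ] (hw : ∀ t, 0 ≤ w t) (x : Ω) :
    ∑ i, fiberWeight w g i * fiberMix w u g ν i x = ∑ t, w t * u t x := by
  simp only [fiberWeight_mul_fiberMix hw]
  exact Finset.sum_fiberwise _ _ _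

end Mixture

section LayerCake

variable {Ω : Type*} [Fintype Ω]

lemma exists_equiv_antitone (D : Ω → ℝ) : ∃ σ : Fin (Fintype.card Ω) ≃ Ω, Antitone (D ∘ σ) := by
  let e := (Fintype.equivFin Ω).symm
  refine ⟨(Tuple.sort fun a => -D (e a)).trans e, fun a b hab => ?_⟩
  have := Tuple.monotone_sort (fun a => -D (e a)) hab
  simp only [Function.comp_apply, Equiv.trans_apply] at this ⊢
  linarith

lemma sum_range_ite_sub_succ (d : ℕ → ℝ) {j N : ℕ} (hjN : j ≤ N) :
    ∑ t ∈ range N, (if j ≤ t then d t - d (t + 1) else 0) = d j - d N := by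
  rw [← Finset.sum_filter, show (range N).filter (j ≤ ·) = Ico j N by ext; simp [and_comm]]
  have htel := Finset.sum_Ico_sub (fun t => -d t) hjN
  simp only [sub_neg_eq_add, neg_add_eq_sub] at htel
  exact htel

/-- Layer-cake decomposition: with `D` sorted decreasingly as `d₀ ≥ d₁ ≥ ⋯`, the layer `A t`
holds the `t + 1` heaviest points and carries the weight `(t + 1) (d_t - d_{t+1})`. -/
theorem exists_layer_decomposition (D : Ω → ℝ) (hD : ∀ x, 0 ≤ D x) :
    ∃ (A : Fin (Fintype.card Ω) → Finset Ω) (w : Fin (Fintype.card Ω) → ℝ),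
      Monotone A ∧ (∀ t, (A t).Nonempty) ∧ (∀ t, 0 ≤ w t) ∧
      ∀ x, D x = ∑ t, w t * unifOn (A t) x := by
  set N := Fintype.card Ω
  obtain ⟨σ, hσ⟩ : ∃ σ : Fin N ≃ Ω, Antitone (D ∘ σ) := exists_equiv_antitone D
  let d : ℕ → ℝ := fun j => if h : j < N then D (σ ⟨j, h⟩) else 0
  have hd : Antitone d := by
    intro a b hab
    by_cases hb : b < N
    · simp only [d, dif_pos hb, dif_pos (hab.trans_lt hb)]
      exact hσ (show (⟨a, hab.trans_lt hb⟩ : Fin N) ≤ ⟨b, hb⟩ from hab)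
    · simp only [d, dif_neg hb]
      split_ifs <;> simp [hD]
  let A : Fin N → Finset Ω := fun t => (Iic t).map σ.toEmbedding
  have hmemA : ∀ t x, x ∈ A t ↔ σ.symm x ≤ t := fun t x => by simp [A, Finset.mem_map_equiv]
  have hcardA : ∀ t : Fin N, #(A t) = (t : ℕ) + 1 := fun t => by simp [A]
  refine ⟨A, fun t => ((t : ℝ) + 1) * (d t - d (t + 1)),
    fun a b hab => Finset.map_subset_map.mpr (Finset.Iic_subset_Iic.mpr hab),
    fun t => ⟨σ t, (hmemA t _).mpr (by simp)⟩,
    fun t => mul_nonneg (by positivity) (sub_nonneg.mpr (hd (Nat.le_succ _))), fun x => ?_⟩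
  set j : ℕ := (σ.symm x : ℕ)
  have hterm : ∀ t : Fin N, ((t : ℝ) + 1) * (d t - d (t + 1)) * unifOn (A t) x =
      if j ≤ t then d t - d (t + 1) else 0 := by
    intro t
    by_cases hjt : j ≤ t
    · rw [if_pos hjt, unifOn_of_mem ((hmemA t x).mpr hjt), hcardA]
      field_simp
      push_cast
      ring
    · rw [if_neg hjt, unifOn_of_notMem (fun h => hjt ((hmemA t x).mp h)), mul_zero]
  rw [Finset.sum_congr rfl fun t _ => hterm t,
    Fin.sum_univ_eq_sum_range (fun t => if j ≤ t then d t - d (t + 1) else 0),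
    sum_range_ite_sub_succ d (σ.symm x).isLt.le]
  simp [d]

end LayerCake

section Buckets

/-- Sizes `s < β` fall in bucket `0`, sizes in `[β b^(j-1), β b^j)` in bucket `j`. -/
noncomputable def bucket (b β s : ℝ) : ℕ := ⌊Real.logb b (s / β) + 1⌋₊

variable {b β s s' : ℝ}

lemma bucket_eq_zero_iff (hb : 1 < b) (hβ : 0 < β) (hs : 0 < s) :
    bucket b β s = 0 ↔ s < β := by
  rw [bucket, Nat.floor_eq_zero, ← div_lt_one hβ, ← Real.logb_neg_iff hb (div_pos hs hβ)]
  constructor <;> intro h <;> linarith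

lemma lt_mul_of_bucket_eq (hb : 1 < b) (hβ : 0 < β) (hs : 0 < s) (hs' : 0 < s')
    (h : bucket b β s' = bucket b β s) (h0 : bucket b β s ≠ 0) : s' < b * s := by
  have hpos : 0 < Real.logb b (s / β) + 1 := Nat.pos_of_floor_pos (Nat.pos_of_ne_zero h0)
  have hlt : Real.logb b (s' / β) + 1 < Real.logb b (b * s / β) + 1 :=
    calc Real.logb b (s' / β) + 1 < (bucket b β s' : ℝ) + 1 := Nat.lt_floor_add_one _
      _ = (bucket b β s : ℝ) + 1 := by rw [h]
      _ ≤ Real.logb b (s / β) + 1 + 1 := by gcongr; exact Nat.floor_le hpos.le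
      _ = Real.logb b (b * s / β) + 1 := by
        rw [mul_div_assoc, Real.logb_mul (by positivity) (by positivity),
          Real.logb_self_eq_one hb]
        ring
  rw [add_lt_add_iff_right] at hlt
  exact (div_lt_div_iff_of_pos_right hβ).mp
    ((Real.logb_lt_logb_iff hb (by positivity) (by positivity)).mp hlt)

lemma bucket_le (hb : 1 < b) (hβ : 1 ≤ β) (hs : 0 < s) {N : ℝ} (hsN : s ≤ N) {k : ℕ}
    (hk : Real.logb b N < k) : bucket b β s ≤ k := by
  refine Nat.le_of_lt_succ ((Nat.floor_lt' k.succ_ne_zero).mpr ?_)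
  have : Real.logb b (s / β) ≤ Real.logb b N :=
    Real.logb_le_logb_of_le hb (by positivity) ((div_le_self hs.le hβ).trans hsN)
  push_cast
  linarith

end Buckets

section HeavyMass

variable {Ω : Type*} [Fintype Ω] {D : Ω → ℝ}

noncomputable def heavyMass (D : Ω → ℝ) (θ : ℝ) : ℝ := ∑ x with θ < D x, D x

lemma sum_le_heavyMass_add (hD : ∀ x, 0 ≤ D x) (S : Finset Ω) {θ : ℝ} (hθ : 0 ≤ θ) :
    ∑ x ∈ S, D x ≤ heavyMass D θ + #S * θ := by
  have hpt : ∀ x ∈ S, D x ≤ (if θ < D x then D x else 0) + θ := by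
    intro x _
    split_ifs with h
    · linarith
    · linarith [not_lt.mp h]
  calc ∑ x ∈ S, D x ≤ ∑ x ∈ S, ((if θ < D x then D x else 0) + θ) := Finset.sum_le_sum hpt
    _ = ∑ x ∈ S, (if θ < D x then D x else 0) + #S * θ := by
        rw [Finset.sum_add_distrib, Finset.sum_const, nsmul_eq_mul]
    _ ≤ heavyMass D θ + #S * θ := by
        gcongr
        rw [heavyMass, Finset.sum_filter]
        exact Finset.sum_le_sum_of_subset_of_nonneg (subset_univ S) fun x _ _ => by
          split_ifs <;> simp [hD]

/-- The pointwise bound behind Gibbs' inequality (`log z ≥ 1 - 1/z`), improved on heavy points. -/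
lemma sub_div_log_two_add_ite_le {N θ y : ℝ} (hN : 0 < N) (hθ : 0 < θ) (hy : 0 ≤ y) :
    (y - N⁻¹) / Real.log 2 + (if θ < y then y * (Real.logb 2 (N * θ) - (Real.log 2)⁻¹) else 0)
      ≤ y * Real.logb 2 (N * y) := by
  have hlog2 : 0 < Real.log 2 := Real.log_pos one_lt_two
  rcases hy.eq_or_lt with rfl | hy
  · rw [if_neg (not_lt.mpr hθ.le), zero_sub, add_zero, zero_mul]
    exact div_nonpos_of_nonpos_of_nonneg (neg_nonpos.mpr (inv_nonneg.mpr hN.le)) hlog2.le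
  split_ifs with h
  · have hmono : y * Real.logb 2 (N * θ) ≤ y * Real.logb 2 (N * y) :=
      mul_le_mul_of_nonneg_left
        (Real.logb_le_logb_of_le one_lt_two (by positivity) (by gcongr)) hy.le
    have : 0 ≤ N⁻¹ / Real.log 2 := by positivity
    rw [sub_div, mul_sub, ← div_eq_mul_inv]
    linarith
  · have hgibbs := Real.one_sub_inv_le_log_of_pos (mul_pos hN hy)
    rw [Real.logb, add_zero, ← mul_div_assoc]
    gcongr
    calc y - N⁻¹ = y * (1 - (N * y)⁻¹) := by field_simp
      _ ≤ y * Real.log (N * y) := by gcongr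

lemma sum_mul_logb_card_mul (hD1 : ∑ x, D x = 1) :
    ∑ x, D x * Real.logb 2 (Fintype.card Ω * D x) = Real.logb 2 (Fintype.card Ω) - ent D := by
  have hpt : ∀ x, D x * Real.logb 2 (Fintype.card Ω * D x) =
      D x * Real.logb 2 (Fintype.card Ω) + D x * Real.logb 2 (D x) := by
    intro x
    rcases eq_or_ne (D x) 0 with h | h
    · simp [h]
    · have : Nonempty Ω := ⟨x⟩
      rw [Real.logb_mul (Nat.cast_ne_zero.mpr Fintype.card_ne_zero) h]
      ring
  simp only [hpt, Finset.sum_add_distrib, ← Finset.sum_mul, hD1, one_mul, ent]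
  ring

theorem heavyMass_mul_le (hD0 : ∀ x, 0 ≤ D x) (hD1 : ∑ x, D x = 1) {θ : ℝ} (hθ : 0 < θ) :
    heavyMass D θ * (Real.logb 2 (Fintype.card Ω * θ) - (Real.log 2)⁻¹)
      ≤ Real.logb 2 (Fintype.card Ω) - ent D := by
  have : Nonempty Ω := by
    by_contra h
    simp [not_nonempty_iff.mp h] at hD1
  have hN : (0 : ℝ) < Fintype.card Ω := Nat.cast_pos.mpr Fintype.card_pos
  have hmean : ∑ x, (D x - (Fintype.card Ω : ℝ)⁻¹) / Real.log 2 = 0 := by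
    rw [← Finset.sum_div, Finset.sum_sub_distrib, hD1, Finset.sum_const, Finset.card_univ,
      nsmul_eq_mul, mul_inv_cancel₀ hN.ne', sub_self, zero_div]
  calc heavyMass D θ * (Real.logb 2 (Fintype.card Ω * θ) - (Real.log 2)⁻¹)
      = ∑ x, ((D x - (Fintype.card Ω : ℝ)⁻¹) / Real.log 2 + if θ < D x then
          D x * (Real.logb 2 (Fintype.card Ω * θ) - (Real.log 2)⁻¹) else 0) := by
        rw [Finset.sum_add_distrib, hmean, zero_add, ← Finset.sum_filter, heavyMass,
          Finset.sum_mul]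
    _ ≤ ∑ x, D x * Real.logb 2 (Fintype.card Ω * D x) :=
        Finset.sum_le_sum fun x _ => sub_div_log_two_add_ite_le hN hθ (hD0 x)
    _ = _ := sum_mul_logb_card_mul hD1

theorem heavyMass_le_of_le_ent (hD0 : ∀ x, 0 ≤ D x) (hD1 : ∑ x, D x = 1) {Δ ε θ : ℝ}
    (hε : 0 < ε) (hΔ : 0 ≤ Δ) (hθ : 0 < θ) (hθ2 : Δ / ε + 2 ≤ Real.logb 2 (Fintype.card Ω * θ))
    (hent : Real.logb 2 (Fintype.card Ω) - Δ ≤ ent D) : heavyMass D θ ≤ ε := by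
  have hlog2 : (Real.log 2)⁻¹ < 2 := by
    rw [inv_lt_comm₀ (Real.log_pos one_lt_two) two_pos]
    linarith [Real.log_two_gt_d9]
  have hq := heavyMass_mul_le hD0 hD1 hθ
  by_contra! hlt
  have hΔq : Δ ≤ heavyMass D θ * (Δ / ε) := by
    rw [← mul_div_assoc, le_div_iff₀ hε, mul_comm Δ]
    exact mul_le_mul_of_nonneg_right hlt.le hΔ
  have : 0 < heavyMass D θ * (Real.logb 2 (Fintype.card Ω * θ) - (Real.log 2)⁻¹ - Δ / ε) :=
    mul_pos (hε.trans hlt) (by linarith)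
  linarith

end HeavyMass

section Decomposition

variable {Ω ι : Type*} [LinearOrder ι] {A : ι → Finset Ω} {w : ι → ℝ}

lemma sum_weight_le_heavyMass_add [Fintype Ω] [Fintype ι] {D : Ω → ℝ} (hD0 : ∀ x, 0 ≤ D x)
    (hD : ∀ x, D x = ∑ t, w t * unifOn (A t) x) (hA : Monotone A) (hne : ∀ t, (A t).Nonempty)
    (hw : ∀ t, 0 ≤ w t) {s : Finset ι} {β ε : ℝ} (hβ : 0 < β) (hε : 0 < ε)
    (hs : ∀ t ∈ s, (#(A t) : ℝ) < max β 1) : ∑ t ∈ s, w t ≤ heavyMass D (ε / β) + ε := by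
  have hheavy : 0 ≤ heavyMass D (ε / β) := Finset.sum_nonneg fun x _ => hD0 x
  rcases s.eq_empty_or_nonempty with rfl | hs_ne
  · rw [Finset.sum_empty]; linarith
  set m := s.max' hs_ne
  have hm : (#(A m) : ℝ) < β := by
    have h1 : (1 : ℝ) ≤ #(A m) := by exact_mod_cast (hne m).card_pos
    rcases lt_max_iff.mp (hs m (s.max'_mem hs_ne)) with h | h
    · exact h
    · linarith
  calc ∑ t ∈ s, w t ≤ ∑ x ∈ A m, D x :=
        sum_weight_le_of_mass_eq_one hD hw (fun t => unifOn_nonneg (A t)) fun t ht =>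
          sum_unifOn_of_superset (hne t) (hA (s.le_max' t ht))
    _ ≤ heavyMass D (ε / β) + #(A m) * (ε / β) := sum_le_heavyMass_add hD0 _ (by positivity)
    _ ≤ heavyMass D (ε / β) + β * (ε / β) := by gcongr
    _ = heavyMass D (ε / β) + ε := by field_simp

lemma support_mixture_unifOn (hA : Monotone A) (hne : ∀ t, (A t).Nonempty) {s : Finset ι}
    {c : ι → ℝ} (hc : ∀ t ∈ s, 0 ≤ c t) {T : ι} (hT : T ∈ s) (hcT : c T ≠ 0)
    (hle : ∀ t ∈ s, c t ≠ 0 → t ≤ T) :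
    Function.support (fun x => ∑ t ∈ s, c t * unifOn (A t) x) = A T := by
  ext x
  rw [Function.mem_support, Ne, Finset.sum_eq_zero_iff_of_nonneg fun t ht =>
    mul_nonneg (hc t ht) (unifOn_nonneg _ x)]
  push Not
  constructor
  · rintro ⟨t, ht, hne⟩
    have hx : x ∈ A t := by
      by_contra hx
      exact right_ne_zero_of_mul hne (unifOn_of_notMem hx)
    exact hA (hle t ht (left_ne_zero_of_mul hne)) hx
  · intro hx
    refine ⟨T, hT, mul_ne_zero hcT ?_⟩
    rw [unifOn_of_mem hx]
    have := (hne T).card_pos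
    positivity

lemma exists_support_mixture_eq_tvDist_le [Fintype Ω] (hA : Monotone A) (hne : ∀ t, (A t).Nonempty)
    (hw : ∀ t, 0 ≤ w t) {s : Finset ι} (hp : ∑ t ∈ s, w t ≠ 0) {ε : ℝ}
    (hs : ∀ t ∈ s, ∀ t' ∈ s, (#(A t') : ℝ) < (1 + ε) * #(A t)) :
    ∃ T ∈ s, Function.support (fun x => ∑ t ∈ s, w t / (∑ t' ∈ s, w t') * unifOn (A t) x) = A T ∧
      tvDist (fun x => ∑ t ∈ s, w t / (∑ t' ∈ s, w t') * unifOn (A t) x) (unifOn (A T)) ≤ ε := by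
  have hc : ∀ t ∈ s, 0 ≤ w t / ∑ t' ∈ s, w t' := fun t _ =>
    div_nonneg (hw t) (Finset.sum_nonneg fun t _ => hw t)
  have hc0 : ∀ t, w t / ∑ t' ∈ s, w t' ≠ 0 ↔ w t ≠ 0 := fun t => by simp [hp]
  obtain ⟨T, hT, hTmax⟩ : ∃ T ∈ s.filter (w · ≠ 0), ∀ t ∈ s.filter (w · ≠ 0), t ≤ T := by
    have hne : (s.filter (w · ≠ 0)).Nonempty := by
      by_contra h
      exact hp (Finset.sum_eq_zero fun t ht => by
        by_contra hwt
        exact h ⟨t, Finset.mem_filter.mpr ⟨ht, hwt⟩⟩)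
    exact ⟨_, Finset.max'_mem _ hne, fun t ht => Finset.le_max' _ t ht⟩
  rw [Finset.mem_filter] at hT
  have hle : ∀ t ∈ s, w t / ∑ t' ∈ s, w t' ≠ 0 → t ≤ T := fun t ht hct =>
    hTmax t (Finset.mem_filter.mpr ⟨ht, (hc0 t).mp hct⟩)
  refine ⟨T, hT.1, support_mixture_unifOn hA hne hc hT.1 ((hc0 T).mpr hT.2) hle,
    tvDist_mixture_le hc (by rw [← Finset.sum_div, div_self hp]) fun t ht hct => ?_⟩
  have hsub := hA (hle t ht hct)
  have ht_pos : (0 : ℝ) < #(A t) := by exact_mod_cast (hne t).card_pos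
  have hcard : (#(A t) : ℝ) ≤ #(A T) := by exact_mod_cast Finset.card_le_card hsub
  rw [tvDist_unifOn_of_subset hsub (hne t), one_sub_div (by positivity),
    div_le_iff₀ (by positivity)]
  nlinarith [hs t ht T hT.1]

lemma exists_support_fiberMix_eq_tvDist_le [Fintype Ω] [Fintype ι] {κ : Type*} [DecidableEq κ]
    (hA : Monotone A) (hne : ∀ t, (A t).Nonempty) (hw : ∀ t, 0 ≤ w t) {g : ι → κ} {i : κ}
    {β ε : ℝ} (hε : 0 ≤ ε) (hβΩ : β ≤ Fintype.card Ω) (hsize : ∀ t, g t = i → β ≤ #(A t))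
    (hratio : ∀ t t', g t = i → g t' = i → (#(A t') : ℝ) < (1 + ε) * #(A t)) :
    ∃ S : Finset Ω, Function.support (fiberMix w (fun t => unifOn (A t)) g (unifOn univ) i) = S ∧
      β ≤ #S ∧ tvDist (fiberMix w (fun t => unifOn (A t)) g (unifOn univ) i) (unifOn S) ≤ ε := by
  by_cases hp : fiberWeight w g i = 0
  · rw [fiberMix, if_pos hp]
    exact ⟨univ, support_unifOn univ, by simpa using hβΩ, by simp [tvDist, hε]⟩
  have hfiber : ∀ t ∈ univ.filter (g · = i), g t = i := fun t ht => (Finset.mem_filter.mp ht).2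
  obtain ⟨T, hT, hsupp, htv⟩ := exists_support_mixture_eq_tvDist_le hA hne hw hp
    fun t ht t' ht' => hratio t t' (hfiber t ht) (hfiber t' ht')
  rw [fiberMix, if_neg hp]
  exact ⟨A T, hsupp, hsize T (hfiber T hT), htv⟩

end Decomposition

theorem exists_nearUniform_decomposition {Ω : Type*} [Fintype Ω] {D : Ω → ℝ}
    (hD0 : ∀ x, 0 ≤ D x) (hD1 : ∑ x, D x = 1) {ε β : ℝ} (hε : 0 < ε) (hβ : 0 < β)
    (hβΩ : β ≤ Fintype.card Ω) (hheavy : heavyMass D (ε / β) ≤ ε) {k : ℕ}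
    (hk : Real.logb (1 + ε) (Fintype.card Ω) < k) :
    ∃ (p : Fin (k + 1) → ℝ) (μ : Fin (k + 1) → Ω → ℝ),
      (∀ i, 0 ≤ p i) ∧ ∑ i, p i = 1 ∧ (∀ i x, 0 ≤ μ i x) ∧ (∀ i, ∑ x, μ i x = 1) ∧
      (∀ x, D x = ∑ i, p i * μ i x) ∧ p 0 ≤ 2 * ε ∧
      ∀ i ≠ 0, ∃ S : Finset Ω,
        Function.support (μ i) = S ∧ β ≤ #S ∧ tvDist (μ i) (unifOn S) ≤ ε := by
  obtain ⟨A, w, hA, hne, hw, hD⟩ := exists_layer_decomposition D hD0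
  have hb : 1 < 1 + ε := by linarith
  -- Bucketing sizes relative to `max β 1` rather than `β` bounds the number of buckets by `k`.
  have hβ' : 0 < max β 1 := lt_max_of_lt_right one_pos
  have hcard : ∀ t, (0 : ℝ) < #(A t) := fun t => by exact_mod_cast (hne t).card_pos
  have hcap : ∀ t, bucket (1 + ε) (max β 1) #(A t) ≤ k := fun t =>
    bucket_le hb (le_max_right _ _) (hcard t) (by exact_mod_cast card_le_univ _) hk
  obtain ⟨g, hg⟩ : ∃ g : Fin (Fintype.card Ω) → Fin (k + 1),
      ∀ t i, g t = i ↔ bucket (1 + ε) (max β 1) #(A t) = i :=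
    ⟨fun t => ⟨_, Nat.lt_succ_of_le (hcap t)⟩, fun t i => Fin.ext_iff⟩
  have hΩ : (univ : Finset Ω).Nonempty := by
    by_contra h
    simp [not_nonempty_iff_eq_empty.mp h] at hD1
  refine ⟨fiberWeight w g, fiberMix w (fun t => unifOn (A t)) g (unifOn univ),
    fiberWeight_nonneg hw, ?_, fiberMix_nonneg hw (fun t => unifOn_nonneg _) (unifOn_nonneg _),
    sum_fiberMix (fun t => sum_unifOn (hne t)) (sum_unifOn hΩ),
    fun x => by rw [sum_fiberWeight_mul_fiberMix hw, hD], ?_, fun i hi => ?_⟩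
  · rw [sum_fiberWeight, ← sum_mixture fun t _ => sum_unifOn (hne t), ← hD1]
    exact Finset.sum_congr rfl fun x _ => (hD x).symm
  · calc fiberWeight w g 0 ≤ heavyMass D (ε / β) + ε :=
          sum_weight_le_heavyMass_add hD0 hD hA hne hw hβ hε fun t ht =>
            (bucket_eq_zero_iff hb hβ' (hcard t)).mp ((hg t 0).mp (Finset.mem_filter.mp ht).2)
      _ ≤ 2 * ε := by linarith
  have hi' : (i : ℕ) ≠ 0 := fun h => hi (Fin.ext h)
  refine exists_support_fiberMix_eq_tvDist_le hA hne hw hε.le hβΩ (fun t ht => ?_)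
    fun t t' ht ht' => lt_mul_of_bucket_eq hb hβ' (hcard t) (hcard t')
      (((hg t' i).mp ht').trans ((hg t i).mp ht).symm) (((hg t i).mp ht).trans_ne hi')
  refine (le_max_left β 1).trans (not_lt.mp fun h => hi' ?_)
  exact ((hg t i).mp ht).symm.trans ((bucket_eq_zero_iff hb hβ' (hcard t)).mpr h)

section Parameters

variable {x Δ ε : ℝ}

lemma logb_one_add_rpow_lt (hε : 0 < ε) (hε2 : ε ≤ 2) (hx : 0 ≤ x) :
    Real.logb (1 + ε) (2 ^ x) < ⌊2 * x / ε⌋₊ + 1 := by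
  have hlog : ε / 2 ≤ Real.log (1 + ε) := by
    refine le_trans ?_ (Real.le_log_one_add_of_nonneg hε.le)
    rw [div_le_div_iff₀ two_pos (by linarith)]
    nlinarith
  have hlog2 : Real.log 2 ≤ 1 := by linarith [Real.log_two_lt_d9]
  have hle : Real.logb (1 + ε) (2 ^ x) ≤ 2 * x / ε := by
    rw [Real.logb, Real.log_rpow two_pos, div_le_div_iff₀ (by linarith) hε]
    nlinarith [mul_le_mul_of_nonneg_left hlog2 (mul_nonneg hx hε.le),
      mul_le_mul_of_nonneg_left hlog (mul_nonneg hx zero_le_two)]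
  linarith [Nat.lt_floor_add_one (2 * x / ε)]

lemma floor_add_one_le (hε : 0 < ε) (hεx : ε ≤ 2 * x) :
    (⌊2 * x / ε⌋₊ : ℝ) + 1 ≤ 4 * x / ε := by
  have h1 : 1 ≤ 2 * x / ε := (one_le_div hε).mpr hεx
  have : 4 * x / ε = 2 * (2 * x / ε) := by ring
  linarith [Nat.floor_le (zero_le_one.trans h1)]

lemma sub_sub_logb_le (hΔ : 0 ≤ Δ) (hε : 0 < ε) (hεx : ε ≤ 4 * x) :
    x - Δ / ε - Real.logb 2 (4 * x / ε) ≤ x := by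
  have : 0 ≤ Real.logb 2 (4 * x / ε) := Real.logb_nonneg one_lt_two ((one_le_div hε).mpr hεx)
  have : 0 ≤ Δ / ε := by positivity
  linarith

lemma add_two_le_logb_rpow_mul (hx : 1 ≤ x) (hε : 0 < ε) :
    Δ / ε + 2 ≤ Real.logb 2 (2 ^ x * (ε / 2 ^ (x - Δ / ε - Real.logb 2 (4 * x / ε)))) := by
  have h4 : Real.logb 2 4 = 2 := by
    rw [show (4 : ℝ) = 2 ^ (2 : ℝ) by norm_num, Real.logb_rpow two_pos one_lt_two.ne']
  have : 0 ≤ Real.logb 2 x := Real.logb_nonneg one_lt_two hx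
  rw [Real.logb_mul (by positivity) (by positivity), Real.logb_div hε.ne' (by positivity),
    Real.logb_rpow two_pos one_lt_two.ne', Real.logb_rpow two_pos one_lt_two.ne',
    Real.logb_div (by positivity) hε.ne', Real.logb_mul (by norm_num) (by positivity), h4]
  linarith

end Parameters

end NearUniform

open NearUniform

/-- Lemma 2.3: any distribution on {0,1}^n with entropy at least n - Δ decomposes into
a convex combination of O(n/ε) near-uniform distributions with large support, plus a
noise term of probability O(ε). -/
theorem stmt0 :
    ∃ c₁ c₂ c₃ c₄ : ℝ, 0 < c₁ ∧ 0 < c₂ ∧ 0 < c₃ ∧ 0 < c₄ ∧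
      ∀ (n : ℕ) (Δ ε : ℝ) (D : (Fin n → Bool) → ℝ),
        0 < n → 0 < ε → 0 ≤ Δ →
        (∀ x, 0 ≤ D x) → (∑ x, D x = 1) →
        (n : ℝ) - Δ ≤ ent D →
        ∃ (k : ℕ) (p : Fin (k+1) → ℝ) (μ : Fin (k+1) → (Fin n → Bool) → ℝ),
          (k : ℝ) ≤ c₁ * n / ε ∧
          (∀ i, 0 ≤ p i) ∧ (∑ i, p i = 1) ∧
          (∀ i x, 0 ≤ μ i x) ∧ (∀ i, ∑ x, μ i x = 1) ∧
          (∀ x, D x = ∑ i, p i * μ i x) ∧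
          p 0 ≤ c₂ * ε ∧
          (∀ i : Fin (k+1), i ≠ 0 →
            (n : ℝ) - Δ / ε - Real.logb 2 (c₃ * n / ε)
              ≤ Real.logb 2 ((Function.support (μ i)).ncard) ∧
            tvDist (μ i)
              (fun x => if x ∈ Function.support (μ i)
                then ((Function.support (μ i)).ncard : ℝ)⁻¹ else 0) ≤ c₄ * ε) := by
  refine ⟨4, 2, 4, 1, by norm_num, by norm_num, by norm_num, by norm_num, ?_⟩
  intro n Δ ε D hn hε hΔ hD0 hD1 hent
  rcases le_or_gt 1 ε with hε1 | hε1
  · exact ⟨0, fun _ => 1, fun _ => D, by rw [Nat.cast_zero]; positivity, fun _ => zero_le_one,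
      by simp, fun _ => hD0, fun _ => hD1, fun x => by simp, by linarith,
      fun i hi => absurd (Fin.fin_one_eq_zero i) hi⟩
  have hn1 : (1 : ℝ) ≤ n := by exact_mod_cast hn
  have hcard : (Fintype.card (Fin n → Bool) : ℝ) = 2 ^ (n : ℝ) := by simp
  set L := (n : ℝ) - Δ / ε - Real.logb 2 (4 * n / ε)
  have hβ : (0 : ℝ) < 2 ^ L := by positivity
  obtain ⟨p, μ, hp0, hp1, hμ0, hμ1, hDμ, hp, hnear⟩ :=
    exists_nearUniform_decomposition hD0 hD1 hε hβ (k := ⌊2 * n / ε⌋₊ + 1)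
      (hcard ▸ Real.rpow_le_rpow_of_exponent_le one_le_two (sub_sub_logb_le hΔ hε (by linarith)))
      (heavyMass_le_of_le_ent hD0 hD1 hε hΔ (by positivity)
        (hcard ▸ add_two_le_logb_rpow_mul hn1 hε)
        (by rwa [hcard, Real.logb_rpow two_pos one_lt_two.ne']))
      (by exact_mod_cast hcard ▸ logb_one_add_rpow_lt hε (by linarith) (by linarith))
  refine ⟨_, p, μ, ?_, hp0, hp1, hμ0, hμ1, hDμ, hp, fun i hi => ?_⟩
  · push_cast
    exact floor_add_one_le hε (by linarith)
  obtain ⟨S, hS, hβS, htv⟩ := hnear i hi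
  rw [hS, Set.ncard_coe_finset, one_mul]
  refine ⟨(Real.le_logb_iff_rpow_le one_lt_two (hβ.trans_le hβS)).mpr hβS, ?_⟩
  convert htv using 2
  ext x
  simp [unifOn]
end

section
/- Let A₁, A₂, ..., A_t, B, and C be discrete random variables such that A₁, ..., A_t are mutually conditionally independent given C. Then I(A₁, A₂, ..., A_t ; B | C) ≥ ∑_{i=1}^t I(A_i ; B | C). -/
open Finset
open scoped Classical

/-- Pushforward of a distribution `p` on `S` along a map `g : S → α`. -/
noncomputable def push {S α : Type*} [Fintype S] [DecidableEq α] (p : S → ℝ) (g : S → α) :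
    α → ℝ := fun a => ∑ s, if g s = a then p s else 0

/-- Conditional mutual information I(X;Y|Z) = H(X,Z) + H(Y,Z) - H(X,Y,Z) - H(Z). -/
noncomputable def condMutInfo {S α β γ : Type*} [Fintype S] [Fintype α] [Fintype β] [Fintype γ]
    [DecidableEq α] [DecidableEq β] [DecidableEq γ]
    (p : S → ℝ) (X : S → α) (Y : S → β) (Z : S → γ) : ℝ :=
  ent (push p (fun s => (X s, Z s))) + ent (push p (fun s => (Y s, Z s)))
    - ent (push p (fun s => (X s, Y s, Z s))) - ent (push p Z)


/-! Writing `I(X;B|C) = H(X|C) - H(X|B,C)`, the claim splits into two facts about the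
conditional entropy of `A = (A₁, …, A_t)`. Conditional independence given `C` makes
`H(A|C) = ∑ H(Aᵢ|C)`: take logarithms in the factorization. For an arbitrary `Y`,
`H(A|Y) ≤ ∑ H(Aᵢ|Y)` is Gibbs' inequality comparing the law of `(A, Y)` with the law
`Pr(Y = y) ∏ Pr(Aᵢ = aᵢ | Y = y)`, which has the same pair marginals `(Aᵢ, Y)` and the same
total mass. -/

open Real

section push

variable {S ω ω' : Type*} [Fintype S] [DecidableEq ω] [DecidableEq ω']

lemma push_nonneg {p : S → ℝ} (hp : ∀ s, 0 ≤ p s) (g : S → ω) (a : ω) :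
    0 ≤ push p g a :=
  Finset.sum_nonneg fun s _ => by split_ifs <;> simp [hp s]

lemma push_le_push_comp {p : S → ℝ} (hp : ∀ s, 0 ≤ p s) (g : S → ω) (f : ω → ω')
    (a : ω) : push p g a ≤ push p (fun s => f (g s)) (f a) :=
  Finset.sum_le_sum fun s _ => by split_ifs <;> simp_all [hp s]

lemma sum_push_mul [Fintype ω] (p : S → ℝ) (g : S → ω) (F : ω → ℝ) :
    ∑ a, push p g a * F a = ∑ s, p s * F (g s) := by
  simp only [push, Finset.sum_mul, ite_mul, zero_mul]
  rw [Finset.sum_comm]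
  simp

lemma sum_push [Fintype ω] (p : S → ℝ) (g : S → ω) : ∑ a, push p g a = ∑ s, p s := by
  simpa using sum_push_mul p g 1

lemma sum_push_pair_left [Fintype ω] (p : S → ℝ) (X : S → ω) (Y : S → ω') (y : ω') :
    ∑ x, push p (fun s => (X s, Y s)) (x, y) = push p Y y := by
  simp only [push, Prod.ext_iff]
  rw [Finset.sum_comm]
  simp [ite_and]

lemma ent_push_of_comp [Fintype ω] [Fintype ω'] (p : S → ℝ) (g : S → ω) {g' : S → ω'}
    (f : ω → ω') (hfg : ∀ s, f (g s) = g' s) :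
    ent (push p g') = -∑ a, push p g a * logb 2 (push p g' (f a)) := by
  rw [ent, sum_push_mul, sum_push_mul p g (fun a => logb 2 (push p g' (f a)))]
  simp only [hfg]

end push

lemma mul_logb_sub_logb_le {b q r : ℝ} (hb : 1 < b) (hq : 0 ≤ q) (hr : 0 ≤ r)
    (hqr : q ≠ 0 → r ≠ 0) : q * (logb b r - logb b q) ≤ (r - q) / log b := by
  have hlogb : 0 < log b := log_pos hb
  rcases hq.eq_or_lt with rfl | hq
  · simpa using div_nonneg hr hlogb.le
  have hr : 0 < r := hr.lt_of_ne (hqr hq.ne').symm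
  have hlog : q * (log r - log q) ≤ r - q :=
    calc q * (log r - log q) = q * log (r / q) := by rw [log_div hr.ne' hq.ne']
      _ ≤ q * (r / q - 1) :=
        mul_le_mul_of_nonneg_left (log_le_sub_one_of_pos (by positivity)) hq.le
      _ = r - q := by field_simp
  rw [logb, logb, ← sub_div, mul_div_assoc']
  exact div_le_div_of_nonneg_right hlog hlogb.le

lemma sum_mul_logb_sub_logb_nonpos {ι : Type*} [Fintype ι] {b : ℝ} (hb : 1 < b)
    {q r : ι → ℝ} (hq : ∀ i, 0 ≤ q i) (hr : ∀ i, 0 ≤ r i) (hqr : ∀ i, q i ≠ 0 → r i ≠ 0)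
    (hsum : ∑ i, r i ≤ ∑ i, q i) : ∑ i, q i * (logb b (r i) - logb b (q i)) ≤ 0 :=
  calc ∑ i, q i * (logb b (r i) - logb b (q i))
      ≤ ∑ i, (r i - q i) / log b :=
        Finset.sum_le_sum fun i _ => mul_logb_sub_logb_le hb (hq i) (hr i) (hqr i)
    _ = (∑ i, r i - ∑ i, q i) / log b := by rw [← Finset.sum_div, Finset.sum_sub_distrib]
    _ ≤ 0 := div_nonpos_of_nonpos_of_nonneg (by linarith) (log_pos hb).le

section condIndepProd

variable {S α δ : Type*} [Fintype S] [DecidableEq α] [DecidableEq δ] {t : ℕ}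

noncomputable def condIndepProd (p : S → ℝ) (A : Fin t → S → α) (Y : S → δ)
    (z : (Fin t → α) × δ) : ℝ :=
  push p Y z.2 * ∏ i, (push p (fun s => (A i s, Y s)) (z.1 i, z.2) / push p Y z.2)

variable {p : S → ℝ} (A : Fin t → S → α) (Y : S → δ)

lemma marginals_pos_of_push_pi_ne_zero (hp : ∀ s, 0 ≤ p s) {z : (Fin t → α) × δ}
    (hz : push p (fun s => ((fun i => A i s), Y s)) z ≠ 0) :
    0 < push p Y z.2 ∧ ∀ i, 0 < push p (fun s => (A i s, Y s)) (z.1 i, z.2) := by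
  have hpos := (push_nonneg hp _ z).lt_of_ne' hz
  exact ⟨hpos.trans_le (push_le_push_comp hp _ Prod.snd z), fun i =>
    hpos.trans_le (push_le_push_comp hp _ (fun z : (Fin t → α) × δ => (z.1 i, z.2)) z)⟩

lemma condIndepProd_nonneg (hp : ∀ s, 0 ≤ p s) (z : (Fin t → α) × δ) :
    0 ≤ condIndepProd p A Y z :=
  mul_nonneg (push_nonneg hp _ _)
    (Finset.prod_nonneg fun _ _ => div_nonneg (push_nonneg hp _ _) (push_nonneg hp _ _))

lemma condIndepProd_pos (hp : ∀ s, 0 ≤ p s) {z : (Fin t → α) × δ}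
    (hz : push p (fun s => ((fun i => A i s), Y s)) z ≠ 0) : 0 < condIndepProd p A Y z := by
  obtain ⟨hR, hAi⟩ := marginals_pos_of_push_pi_ne_zero A Y hp hz
  exact mul_pos hR (Finset.prod_pos fun i _ => div_pos (hAi i) hR)

lemma sum_condIndepProd [Fintype α] [Fintype δ] :
    ∑ z, condIndepProd p A Y z = ∑ s, p s := by
  rw [Fintype.sum_prod_type_right]
  calc ∑ d, ∑ a, condIndepProd p A Y (a, d)
      = ∑ d, push p Y d * (push p Y d / push p Y d) ^ t := by
        refine Finset.sum_congr rfl fun d _ => ?_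
        simp only [condIndepProd]
        rw [← Finset.mul_sum,
          ← Fintype.prod_sum fun i x => push p (fun s => (A i s, Y s)) (x, d) / push p Y d]
        simp only [← Finset.sum_div, sum_push_pair_left, Finset.prod_const, Finset.card_univ,
          Fintype.card_fin]
    _ = ∑ d, push p Y d :=
        Finset.sum_congr rfl fun d _ => by by_cases hd : push p Y d = 0 <;> simp [hd]
    _ = ∑ s, p s := sum_push p Y

lemma logb_condIndepProd (hp : ∀ s, 0 ≤ p s) {z : (Fin t → α) × δ}
    (hz : push p (fun s => ((fun i => A i s), Y s)) z ≠ 0) :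
    logb 2 (condIndepProd p A Y z)
      = ∑ i, logb 2 (push p (fun s => (A i s, Y s)) (z.1 i, z.2))
        - ((t : ℝ) - 1) * logb 2 (push p Y z.2) := by
  obtain ⟨hR, hAi⟩ := marginals_pos_of_push_pi_ne_zero A Y hp hz
  rw [condIndepProd,
    logb_mul hR.ne' (Finset.prod_ne_zero_iff.2 fun i _ => (div_pos (hAi i) hR).ne'),
    logb_prod _ _ fun i _ => (div_pos (hAi i) hR).ne']
  simp only [logb_div (hAi _).ne' hR.ne', Finset.sum_sub_distrib, Finset.sum_const,
    Finset.card_univ, Fintype.card_fin, nsmul_eq_mul]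
  ring

end condIndepProd

section condEnt

variable {S α δ : Type*} [Fintype S] [Fintype α] [Fintype δ] [DecidableEq α] [DecidableEq δ]

noncomputable def condEnt (p : S → ℝ) (X : S → α) (Y : S → δ) : ℝ :=
  ent (push p (fun s => (X s, Y s))) - ent (push p Y)

lemma condMutInfo_eq_condEnt_sub {β : Type*} [Fintype β] [DecidableEq β] (p : S → ℝ)
    (X : S → α) (Y : S → β) (Z : S → δ) :
    condMutInfo p X Y Z = condEnt p X Z - condEnt p X (fun s => (Y s, Z s)) := by
  rw [condMutInfo, condEnt, condEnt]
  ring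

lemma condEnt_const (p : S → ℝ) (x : α) (Y : S → δ) : condEnt p (fun _ => x) Y = 0 := by
  rw [condEnt, sub_eq_zero, ent_push_of_comp p Y (Prod.mk x) fun _ => rfl, ent]
  congr 1
  refine Finset.sum_congr rfl fun y _ => ?_
  simp [push]

variable {t : ℕ} {p : S → ℝ} (A : Fin t → S → α) (Y : S → δ)

lemma sum_condEnt_sub_condEnt_pi :
    ∑ i, condEnt p (A i) Y - condEnt p (fun s i => A i s) Y
      = ∑ z, push p (fun s => ((fun i => A i s), Y s)) z
          * (logb 2 (push p (fun s => ((fun i => A i s), Y s)) z)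
            + ((t : ℝ) - 1) * logb 2 (push p Y z.2)
            - ∑ i, logb 2 (push p (fun s => (A i s, Y s)) (z.1 i, z.2))) := by
  have hY : ent (push p Y) = -∑ z, push p (fun s => ((fun i => A i s), Y s)) z
      * logb 2 (push p Y z.2) :=
    ent_push_of_comp p _ Prod.snd fun _ => rfl
  have hAi : ∀ i, ent (push p (fun s => (A i s, Y s))) = -∑ z,
      push p (fun s => ((fun i => A i s), Y s)) z
        * logb 2 (push p (fun s => (A i s, Y s)) (z.1 i, z.2)) :=
    fun i => ent_push_of_comp p _ (fun z : (Fin t → α) × δ => (z.1 i, z.2)) fun _ => rfl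
  simp only [condEnt, Finset.sum_sub_distrib, Finset.sum_const, Finset.card_univ,
    Fintype.card_fin, nsmul_eq_mul, hY, hAi, mul_sub, mul_add, Finset.mul_sum,
    Finset.sum_neg_distrib]
  rw [ent, Finset.sum_comm]
  simp only [Finset.sum_add_distrib, mul_left_comm _ ((t : ℝ) - 1), ← Finset.mul_sum]
  ring

lemma condEnt_pi_le_sum (hp : ∀ s, 0 ≤ p s) :
    condEnt p (fun s i => A i s) Y ≤ ∑ i, condEnt p (A i) Y := by
  have hgibbs := sum_mul_logb_sub_logb_nonpos one_lt_two (push_nonneg hp _)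
    (condIndepProd_nonneg A Y hp) (fun z hz => (condIndepProd_pos A Y hp hz).ne')
    ((sum_condIndepProd A Y).trans (sum_push p _).symm).le
  rw [← neg_nonneg, ← Finset.sum_neg_distrib] at hgibbs
  rw [← sub_nonneg, sum_condEnt_sub_condEnt_pi]
  refine hgibbs.trans_eq (Finset.sum_congr rfl fun z _ => ?_)
  by_cases hz : push p (fun s => ((fun i => A i s), Y s)) z = 0
  · simp [hz]
  rw [logb_condIndepProd A Y hp hz]
  ring

lemma condEnt_pi_eq_sum (hp : ∀ s, 0 ≤ p s)
    (hci : ∀ (a : Fin t → α) (c : δ),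
      push p (fun s => ((fun i => A i s), Y s)) (a, c) * (push p Y c) ^ (t - 1)
        = ∏ i, push p (fun s => (A i s, Y s)) (a i, c)) :
    condEnt p (fun s i => A i s) Y = ∑ i, condEnt p (A i) Y := by
  rcases Nat.eq_zero_or_pos t with rfl | ht
  · have hconst : (fun s (i : Fin 0) => A i s) = fun _ => Fin.elim0 :=
      funext fun _ => Subsingleton.elim _ _
    simp [hconst, condEnt_const]
  rw [eq_comm, ← sub_eq_zero, sum_condEnt_sub_condEnt_pi]
  refine Finset.sum_eq_zero fun z _ => ?_
  by_cases hz : push p (fun s => ((fun i => A i s), Y s)) z = 0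
  · simp [hz]
  obtain ⟨hR, hAi⟩ := marginals_pos_of_push_pi_ne_zero A Y hp hz
  have hlog := congrArg (logb 2) (hci z.1 z.2)
  rw [logb_mul hz (pow_ne_zero _ hR.ne'), logb_pow, logb_prod _ _ fun i _ => (hAi i).ne',
    Nat.cast_pred ht] at hlog
  rw [← hlog]
  ring

end condEnt

theorem stmt4_general {S α β γ : Type*} [Fintype S] [Fintype α] [Fintype β] [Fintype γ]
    [DecidableEq α] [DecidableEq β] [DecidableEq γ]
    (t : ℕ) (p : S → ℝ) (hp0 : ∀ s, 0 ≤ p s)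
    (A : Fin t → S → α) (B : S → β) (C : S → γ)
    (hci : ∀ (a : Fin t → α) (c : γ),
      push p (fun s => (((fun i => A i s) : Fin t → α), C s)) (a, c)
          * (push p C c) ^ (t - 1)
        = ∏ i, push p (fun s => (A i s, C s)) (a i, c)) :
    ∑ i, condMutInfo p (A i) B C
      ≤ condMutInfo p (fun s => ((fun i => A i s) : Fin t → α)) B C := by
  have hC := condEnt_pi_eq_sum A C hp0 hci
  have hBC := condEnt_pi_le_sum A (fun s => (B s, C s)) hp0
  simp only [condMutInfo_eq_condEnt_sub, Finset.sum_sub_distrib]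
  linarith

/-- Fact 2.2(5): conditional super-additivity of mutual information. If A₁,...,A_t are
mutually conditionally independent given C (expressed by the factorization
Pr(A = a, C = c) · Pr(C = c)^(t-1) = ∏ᵢ Pr(Aᵢ = aᵢ, C = c)), then
I(A₁,...,A_t ; B | C) ≥ ∑ᵢ I(Aᵢ ; B | C). -/
theorem stmt4 {S α β γ : Type*} [Fintype S] [Fintype α] [Fintype β] [Fintype γ]
    [DecidableEq α] [DecidableEq β] [DecidableEq γ]
    (t : ℕ) (p : S → ℝ) (hp0 : ∀ s, 0 ≤ p s) (hp1 : ∑ s, p s = 1)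
    (A : Fin t → S → α) (B : S → β) (C : S → γ)
    (hci : ∀ (a : Fin t → α) (c : γ),
      push p (fun s => (((fun i => A i s) : Fin t → α), C s)) (a, c)
          * (push p C c) ^ (t - 1)
        = ∏ i, push p (fun s => (A i s, C s)) (a i, c)) :
    ∑ i, condMutInfo p (A i) B C
      ≤ condMutInfo p (fun s => ((fun i => A i s) : Fin t → α)) B C :=
  stmt4_general t p hp0 A B C hci
end

section
/- Let G(V∪W, E) be the graph obtained from an instance (x, M) of BHH⁰_{n,t} with t even and ‖x‖₀ = n/2, via the following construction: for each i with x_i = 1, add an edge between v_i and w_i; for each hyperedge e of the perfect t-hypermatching M, add a clique on the vertices {w_i : i ∈ e}. Then: if Mx = 0^{n/t}, the maximum matching size of G equals 3n/4; and if Mx = 1^{n/t}, the maximum matching size of G equals 3n/4 − n/(2t). -/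
/-!
Every edge of the graph has its `W`-endpoints inside a single hyperedge `j`, so a matching
splits along the hyperedges. The edges of hyperedge `j` cover distinct vertices among the `t`
vertices `w_i` of `j` and the `k_j` vertices `v_i` with `i ∈ j` and `x_i = 1`, hence there are at
most `⌊(t + k_j) / 2⌋` of them; the pendant edges `v_i w_i` together with a pairing of the
remaining `t - k_j` vertices of the clique attain this bound. So the maximum matching size is
`∑_j ⌊(t + k_j) / 2⌋`. As `t` is even, this is `(n + ∑_j k_j) / 2 = 3n/4` if every `k_j` is even,
and `3n/4 - m/2` if every `k_j` is odd, where `m = n/t`.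
-/

open Finset
open scoped Classical

/-- `M` is a matching in the graph `G`: a set of edges of `G` that are pairwise
vertex-disjoint. -/
def IsMatchingIn {V : Type*} (G : SimpleGraph V) (M : Finset (Sym2 V)) : Prop :=
  (∀ e ∈ M, e ∈ G.edgeSet) ∧
  ∀ e ∈ M, ∀ f ∈ M, e ≠ f → ∀ v : V, v ∈ e → v ∉ f

/-- The maximum matching size of a graph on a finite vertex set. -/
noncomputable def matchNum {V : Type*} [Fintype V] (G : SimpleGraph V) : ℕ :=
  sSup {k | ∃ M : Finset (Sym2 V), IsMatchingIn G M ∧ M.card = k}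

section Matching

variable {V : Type*} {G : SimpleGraph V}

lemma isMatchingIn_singleton {e : Sym2 V} (he : e ∈ G.edgeSet) : IsMatchingIn G {e} :=
  ⟨by simpa using he, by simp_all⟩

lemma IsMatchingIn.mono {M M' : Finset (Sym2 V)} (hM : IsMatchingIn G M) (hM' : M' ⊆ M) :
    IsMatchingIn G M' :=
  ⟨fun e he => hM.1 e (hM' he), fun e he f hf => hM.2 e (hM' he) f (hM' hf)⟩

lemma disjoint_of_subset_sym2 {S₁ S₂ : Finset V} {M₁ M₂ : Finset (Sym2 V)}
    (hS : Disjoint S₁ S₂) (hM₁ : M₁ ⊆ S₁.sym2) (hM₂ : M₂ ⊆ S₂.sym2) : Disjoint M₁ M₂ := by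
  refine disjoint_left.2 fun e he₁ he₂ => ?_
  induction e using Sym2.ind with
  | _ a b =>
    exact disjoint_left.1 hS (mk_mem_sym2_iff.1 (hM₁ he₁)).1 (mk_mem_sym2_iff.1 (hM₂ he₂)).1

lemma matchNum_eq_card [Fintype V] {M : Finset (Sym2 V)} (hM : IsMatchingIn G M)
    (hmax : ∀ M', IsMatchingIn G M' → M'.card ≤ M.card) : matchNum G = M.card :=
  IsGreatest.csSup_eq ⟨⟨M, hM, rfl⟩, by rintro _ ⟨M', hM', rfl⟩; exact hmax M' hM'⟩

variable [DecidableEq V]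

lemma IsMatchingIn.union {S₁ S₂ : Finset V} {M₁ M₂ : Finset (Sym2 V)}
    (h₁ : IsMatchingIn G M₁) (h₂ : IsMatchingIn G M₂)
    (hM₁ : M₁ ⊆ S₁.sym2) (hM₂ : M₂ ⊆ S₂.sym2) (hS : Disjoint S₁ S₂) :
    IsMatchingIn G (M₁ ∪ M₂) := by
  have cross : ∀ e ∈ M₁, ∀ f ∈ M₂, ∀ v ∈ e, v ∉ f := fun e he f hf v hve hvf =>
    disjoint_left.1 hS (mem_sym2_iff.1 (hM₁ he) v hve) (mem_sym2_iff.1 (hM₂ hf) v hvf)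
  refine ⟨fun e he => (mem_union.1 he).elim (h₁.1 e) (h₂.1 e), ?_⟩
  intro e he f hf hef v hve
  rcases mem_union.1 he with he | he <;> rcases mem_union.1 hf with hf | hf
  · exact h₁.2 e he f hf hef v hve
  · exact cross e he f hf v hve
  · exact fun hvf => cross f hf e he v hvf hve
  · exact h₂.2 e he f hf hef v hve

lemma IsMatchingIn.biUnion {κ : Type*} {s : Finset κ} {M : κ → Finset (Sym2 V)}
    {S : κ → Finset V} (hM : ∀ j ∈ s, IsMatchingIn G (M j)) (hMS : ∀ j ∈ s, M j ⊆ (S j).sym2)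
    (hS : (s : Set κ).PairwiseDisjoint S) : IsMatchingIn G (s.biUnion M) := by
  refine ⟨fun e he => ?_, fun e he f hf hef v hve hvf => ?_⟩
  · obtain ⟨j, hj, he⟩ := mem_biUnion.1 he
    exact (hM j hj).1 e he
  obtain ⟨j, hj, he⟩ := mem_biUnion.1 he
  obtain ⟨j', hj', hf⟩ := mem_biUnion.1 hf
  by_cases hjj : j = j'
  · subst hjj
    exact (hM j hj).2 e he f hf hef v hve hvf
  · exact disjoint_left.1 (hS hj hj' hjj) (mem_sym2_iff.1 (hMS j hj he) v hve)
      (mem_sym2_iff.1 (hMS j' hj' hf) v hvf)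

lemma card_biUnion_of_subset_sym2 {κ : Type*} {s : Finset κ} {M : κ → Finset (Sym2 V)}
    {S : κ → Finset V} (hMS : ∀ j ∈ s, M j ⊆ (S j).sym2)
    (hS : (s : Set κ).PairwiseDisjoint S) : (s.biUnion M).card = ∑ j ∈ s, (M j).card :=
  card_biUnion fun j hj j' hj' hjj =>
    disjoint_of_subset_sym2 (hS hj hj' hjj) (hMS j hj) (hMS j' hj')

lemma IsMatchingIn.two_mul_card_le {M : Finset (Sym2 V)} {S : Finset V}
    (hM : IsMatchingIn G M) (hMS : M ⊆ S.sym2) : 2 * M.card ≤ S.card :=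
  calc 2 * M.card = ∑ e ∈ M, e.toFinset.card := by
        rw [mul_comm, ← smul_eq_mul, ← sum_const]
        exact sum_congr rfl fun e he =>
          (Sym2.card_toFinset_of_not_isDiag e (G.not_isDiag_of_mem_edgeSet (hM.1 e he))).symm
    _ = (M.biUnion Sym2.toFinset).card := by
        refine (card_biUnion fun e he f hf hef => disjoint_left.2 ?_).symm
        intro v hve hvf
        exact hM.2 e he f hf hef v (by simpa using hve) (by simpa using hvf)
    _ ≤ S.card := card_le_card fun v hv => by
        obtain ⟨e, he, hve⟩ := mem_biUnion.1 hv
        exact mem_sym2_iff.1 (hMS he) v (by simpa using hve)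

lemma exists_isMatchingIn_of_isClique (T : Finset V) (hT : G.IsClique (T : Set V)) :
    ∃ M, IsMatchingIn G M ∧ M ⊆ T.sym2 ∧ M.card = T.card / 2 := by
  induction T using strongInduction with
  | H T ih =>
    by_cases hT2 : T.card < 2
    · exact ⟨∅, ⟨by simp, by simp⟩, empty_subset _, by simp; omega⟩
    obtain ⟨a, ha, b, hb, hab⟩ := one_lt_card.1 (by omega : 1 < T.card)
    have hpair : {a, b} ⊆ T := insert_subset ha (singleton_subset_iff.2 hb)
    have hrest : T \ {a, b} ⊂ T := sdiff_ssubset hpair (insert_nonempty a {b})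
    obtain ⟨M, hM, hMT, hcard⟩ := ih _ hrest (hT.subset (coe_subset.2 hrest.subset))
    have hedge : s(a, b) ∈ ({a, b} : Finset V).sym2 := by simp
    refine ⟨{s(a, b)} ∪ M, (isMatchingIn_singleton (G.mem_edgeSet.2 (hT ha hb hab))).union hM
      (singleton_subset_iff.2 hedge) hMT disjoint_sdiff, ?_, ?_⟩
    · exact union_subset (singleton_subset_iff.2 (sym2_mono hpair hedge))
        (hMT.trans (sym2_mono hrest.subset))
    · rw [card_union_of_disjoint (disjoint_of_subset_sym2 disjoint_sdiff
        (singleton_subset_iff.2 hedge) hMT), hcard, card_sdiff_of_subset hpair,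
        card_pair hab, card_singleton]
      omega

end Matching

lemma sum_card_filter_fiber_and {ι κ : Type*} [Fintype ι] [Fintype κ] [DecidableEq κ]
    (h : ι → κ) (p : ι → Prop) [DecidablePred p] :
    ∑ j, (univ.filter fun i => h i = j ∧ p i).card = (univ.filter p).card := by
  rw [card_eq_sum_card_fiberwise (f := h) (t := univ) fun _ _ => mem_univ _]
  exact sum_congr rfl fun j _ => by simp only [filter_filter, and_comm]

lemma sum_div_two_mul_two_add_card_mul {κ : Type*} (s : Finset κ) (a : κ → ℕ) {r : ℕ}
    (ha : ∀ j ∈ s, a j % 2 = r) : (∑ j ∈ s, a j / 2) * 2 + s.card * r = ∑ j ∈ s, a j := by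
  rw [sum_mul, card_eq_sum_ones, sum_mul, ← sum_add_distrib]
  exact sum_congr rfl fun j hj => by rw [one_mul, ← ha j hj]; exact Nat.div_add_mod' (a j) 2

section BHH

variable {ι κ : Type*}

/-- `Sum.inl i` is `v_i` and `Sum.inr i` is `w_i`; the hyperedges of `M` are the fibers of `h`. -/
def bhhGraph (x : ι → Bool) (h : ι → κ) : SimpleGraph (ι ⊕ ι) where
  Adj
    | .inl i, .inr i' => i = i' ∧ x i = true
    | .inr i, .inl i' => i = i' ∧ x i = true
    | .inr i, .inr i' => i ≠ i' ∧ h i = h i'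
    | .inl _, .inl _ => False
  symm := ⟨by rintro (i | i) (i' | i') hadj <;> grind⟩
  loopless := ⟨by rintro (i | i) <;> simp⟩

variable (x : ι → Bool) (h : ι → κ)

lemma exists_isMatchingIn_pendant (X : Finset ι) (hX : ∀ i ∈ X, x i = true) :
    ∃ P, IsMatchingIn (bhhGraph x h) P ∧ P ⊆ (X.disjSum X).sym2 ∧ P.card = X.card := by
  have hPS : ∀ i ∈ X, {s(Sum.inl i, Sum.inr i)} ⊆ (({i} : Finset ι).disjSum {i}).sym2 :=
    fun i _ => by simp
  have hSdisj : (X : Set ι).PairwiseDisjoint fun i => ({i} : Finset ι).disjSum {i} := by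
    intro i _ i' _ hii
    refine disjoint_left.2 ?_
    rintro (a | a) <;> simp_all
  refine ⟨X.biUnion fun i => {s(Sum.inl i, Sum.inr i)},
    IsMatchingIn.biUnion (fun i hi => isMatchingIn_singleton (by simpa [bhhGraph] using hX i hi))
      hPS hSdisj, biUnion_subset.2 fun i hi => (hPS i hi).trans ?_, ?_⟩
  · exact sym2_mono (disjSum_mono (by simpa using hi) (by simpa using hi))
  · simp [card_biUnion_of_subset_sym2 hPS hSdisj]

variable [Fintype ι] [DecidableEq κ]

def fiberVertices (j : κ) : Finset (ι ⊕ ι) :=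
  ({i | h i = j ∧ x i = true} : Finset ι).disjSum {i | h i = j}

lemma pairwise_disjoint_fiberVertices :
    Pairwise (Function.onFun Disjoint (fiberVertices x h)) := by
  intro j j' hjj
  refine disjoint_left.2 ?_
  rintro (i | i) <;> simp_all [fiberVertices]

lemma exists_mem_sym2_fiberVertices {e : Sym2 (ι ⊕ ι)} (he : e ∈ (bhhGraph x h).edgeSet) :
    ∃ j, e ∈ (fiberVertices x h j).sym2 := by
  induction e using Sym2.ind with
  | _ a b =>
    rcases a with i | i <;> rcases b with i' | i' <;>
      simp only [SimpleGraph.mem_edgeSet, bhhGraph] at he <;>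
      exact ⟨h i, by aesop (add norm fiberVertices)⟩

lemma exists_isMatchingIn_fiberVertices (j : κ) :
    ∃ M, IsMatchingIn (bhhGraph x h) M ∧ M ⊆ (fiberVertices x h j).sym2 ∧
      M.card = (fiberVertices x h j).card / 2 := by
  unfold fiberVertices
  set X : Finset ι := {i | h i = j ∧ x i = true}
  set Y : Finset ι := {i | h i = j ∧ x i = false}
  have hXF : X ⊆ ({i | h i = j} : Finset ι) := fun i => by simp +contextual [X]
  have hYF : Y ⊆ ({i | h i = j} : Finset ι) := fun i => by simp +contextual [Y]
  have hfiber : ({i | h i = j} : Finset ι).card = X.card + Y.card := by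
    rw [← card_union_of_disjoint (disjoint_filter.2 fun i _ hX hY => by simp_all)]
    congr 1
    ext i
    simp only [mem_union, mem_filter, mem_univ, true_and]
    cases x i <;> simp
  obtain ⟨P, hP, hPX, hPcard⟩ :=
    exists_isMatchingIn_pendant x h X fun i hi => (mem_filter.1 hi).2.2
  have hclique : (bhhGraph x h).IsClique ((∅ : Finset ι).disjSum Y : Set (ι ⊕ ι)) := by
    rintro (a | a) ha (b | b) hb hab <;> simp_all [bhhGraph, Y]
  obtain ⟨Q, hQ, hQY, hQcard⟩ := exists_isMatchingIn_of_isClique _ hclique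
  have hXY : Disjoint (X.disjSum X) ((∅ : Finset ι).disjSum Y) := by
    refine disjoint_left.2 ?_
    rintro (a | a) <;> simp_all [X, Y]
  refine ⟨P ∪ Q, hP.union hQ hPX hQY hXY, union_subset ?_ ?_, ?_⟩
  · exact hPX.trans (sym2_mono (disjSum_mono subset_rfl hXF))
  · exact hQY.trans (sym2_mono (disjSum_mono (empty_subset _) hYF))
  · rw [card_union_of_disjoint (disjoint_of_subset_sym2 hXY hPX hQY), hPcard, hQcard,
      card_disjSum, card_disjSum, hfiber, card_empty]
    omega

variable [DecidableEq ι] [Fintype κ]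

lemma IsMatchingIn.card_le_sum_fiberVertices {M : Finset (Sym2 (ι ⊕ ι))}
    (hM : IsMatchingIn (bhhGraph x h) M) :
    M.card ≤ ∑ j, (fiberVertices x h j).card / 2 :=
  calc M.card ≤ (univ.biUnion fun j => M.filter (· ∈ (fiberVertices x h j).sym2)).card :=
        card_le_card fun e he => by
          obtain ⟨j, hj⟩ := exists_mem_sym2_fiberVertices x h (hM.1 e he)
          exact mem_biUnion.2 ⟨j, mem_univ _, mem_filter.2 ⟨he, hj⟩⟩
    _ ≤ ∑ j, (M.filter (· ∈ (fiberVertices x h j).sym2)).card := card_biUnion_le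
    _ ≤ ∑ j, (fiberVertices x h j).card / 2 := sum_le_sum fun j _ => by
        rw [Nat.le_div_iff_mul_le two_pos, mul_comm]
        exact (hM.mono (filter_subset _ _)).two_mul_card_le
          fun e he => (mem_filter.1 he).2

theorem matchNum_bhhGraph :
    matchNum (bhhGraph x h) = ∑ j, (fiberVertices x h j).card / 2 := by
  choose M hM hMS hcard using exists_isMatchingIn_fiberVertices x h
  have hdisj := (pairwise_disjoint_fiberVertices x h).set_pairwise (univ : Finset κ)
  have hbiUnion := IsMatchingIn.biUnion (fun j _ => hM j) (fun j _ => hMS j) hdisj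
  have hbiUnion_card : (univ.biUnion M).card = ∑ j, (fiberVertices x h j).card / 2 := by
    rw [card_biUnion_of_subset_sym2 (fun j _ => hMS j) hdisj]
    exact sum_congr rfl fun j _ => hcard j
  rw [matchNum_eq_card hbiUnion fun M' hM' => hbiUnion_card ▸ hM'.card_le_sum_fiberVertices x h,
    hbiUnion_card]

end BHH

theorem stmt5_general (n m t : ℕ) (hteven : Even t) (hnmt : n = m * t)
    (x : Fin n → Bool) (h : Fin n → Fin m)
    (hfib : ∀ j : Fin m, (Finset.univ.filter (fun i => h i = j)).card = t)
    (hx : (Finset.univ.filter (fun i => x i = true)).card * 2 = n)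
    (G : SimpleGraph (Fin n ⊕ Fin n))
    (hG : ∀ a b, G.Adj a b ↔
      ((∃ i : Fin n, x i = true ∧
          ((a = Sum.inl i ∧ b = Sum.inr i) ∨ (a = Sum.inr i ∧ b = Sum.inl i))) ∨
        (∃ i i' : Fin n, i ≠ i' ∧ h i = h i' ∧
          ((a = Sum.inr i ∧ b = Sum.inr i') ∨ (a = Sum.inr i' ∧ b = Sum.inr i))))) :
    ((∀ j : Fin m, (Finset.univ.filter (fun i => h i = j ∧ x i = true)).card % 2 = 0) →
        matchNum G * 4 = 3 * n) ∧
    ((∀ j : Fin m, (Finset.univ.filter (fun i => h i = j ∧ x i = true)).card % 2 = 1) →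
        matchNum G * 4 * t = 3 * n * t - 2 * n) := by
  obtain rfl : G = bhhGraph x h := by
    ext a b
    rw [hG]
    rcases a with i | i <;> rcases b with i' | i' <;> simp [bhhGraph] <;> grind
  have hsum : ∑ j, (fiberVertices x h j).card = n + n / 2 := by
    simp only [fiberVertices, card_disjSum, hfib, sum_add_distrib, sum_card_filter_fiber_and,
      sum_const, card_univ, Fintype.card_fin, smul_eq_mul]
    omega
  have hparity : ∀ r, (∀ j, (univ.filter fun i => h i = j ∧ x i = true).card % 2 = r) →
      ∀ j ∈ univ, (fiberVertices x h j).card % 2 = r := fun r hr j _ => by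
    rw [fiberVertices, card_disjSum, hfib, ← hr j, Nat.add_mod, Nat.even_iff.1 hteven,
      add_zero, Nat.mod_mod]
  rw [matchNum_bhhGraph]
  refine ⟨fun hyes => ?_, fun hno => ?_⟩
  · have := sum_div_two_mul_two_add_card_mul univ _ (hparity 0 hyes)
    omega
  · have := sum_div_two_mul_two_add_card_mul univ _ (hparity 1 hno)
    rw [hsum, card_univ, Fintype.card_fin] at this
    rw [show (∑ j, (fiberVertices x h j).card / 2) * 4 = 3 * n - 2 * m by omega, Nat.sub_mul,
      hnmt]
    ring_nf

/-- Claim 2.5: in the graph `G` on `V ⊔ W` (both copies of `[n]`) built from a BHH⁰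
instance `(x, M)` with `t` even and `‖x‖₀ = n/2` — where `v_i ~ w_i` whenever `x_i = 1`,
and the `w`-vertices of each hyperedge (fiber of `h : [n] → [n/t]`, all fibers of size
`t`) form a clique — the maximum matching size is `3n/4` in the Yes case (all fiber
parities of `x` are 0), and `3n/4 - n/(2t)` in the No case (all fiber parities are 1).
Stated multiplied out to avoid division. -/
theorem stmt5 (n m t : ℕ) (ht : 2 ≤ t) (hteven : Even t) (hnmt : n = m * t)
    (x : Fin n → Bool) (h : Fin n → Fin m)
    (hfib : ∀ j : Fin m, (Finset.univ.filter (fun i => h i = j)).card = t)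
    (hx : (Finset.univ.filter (fun i => x i = true)).card * 2 = n)
    (G : SimpleGraph (Fin n ⊕ Fin n))
    (hG : ∀ a b, G.Adj a b ↔
      ((∃ i : Fin n, x i = true ∧
          ((a = Sum.inl i ∧ b = Sum.inr i) ∨ (a = Sum.inr i ∧ b = Sum.inl i))) ∨
        (∃ i i' : Fin n, i ≠ i' ∧ h i = h i' ∧
          ((a = Sum.inr i ∧ b = Sum.inr i') ∨ (a = Sum.inr i' ∧ b = Sum.inr i))))) :
    ((∀ j : Fin m, (Finset.univ.filter (fun i => h i = j ∧ x i = true)).card % 2 = 0) →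
        matchNum G * 4 = 3 * n) ∧
    ((∀ j : Fin m, (Finset.univ.filter (fun i => h i = j ∧ x i = true)).card % 2 = 1) →
        matchNum G * 4 * t = 3 * n * t - 2 * n) :=
  stmt5_general n m t hteven hnmt x h hfib hx G hG
end

section
/- Let G be a graph on n vertices with maximum matching size opt(G) ≥ C·α² for a sufficiently large constant C, and let α ≥ log n. Sample each vertex with a four-wise independent hash function with probability p = (log n)/α and let G_smp be the induced subgraph on sampled vertices. Then with probability 1 − o(1/log n), the maximum matching size of G_smp is at least (log² n / (2α²))·opt(G). -/
open Finset
open scoped Classical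

/-- The maximum size of a matching of `G` all of whose edges have both endpoints in
the vertex set `A` (i.e. the matching number of the induced subgraph on `A`). -/
noncomputable def matchNumOn {V : Type*} [Fintype V] (G : SimpleGraph V) (A : Set V) : ℕ :=
  sSup {k | ∃ M : Finset (Sym2 V), IsMatchingIn G M ∧
    (∀ e ∈ M, ∀ v : V, v ∈ e → v ∈ A) ∧ M.card = k}

section WeightedSums

variable {S : Type*} [Fintype S] (q : S → ℝ)

lemma sum_mul_centered_indicators (hq1 : ∑ s, q s = 1) (P Q : S → Prop) [DecidablePred P]
    [DecidablePred Q] (r : ℝ) :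
    ∑ s, q s * (((if P s then 1 else 0) - r) * ((if Q s then 1 else 0) - r)) =
      (∑ s, if P s ∧ Q s then q s else 0) - r * (∑ s, if P s then q s else 0)
        - r * (∑ s, if Q s then q s else 0) + r ^ 2 := by
  have hpoint : ∀ s, q s * (((if P s then 1 else 0) - r) * ((if Q s then 1 else 0) - r)) =
      (if P s ∧ Q s then q s else 0) - r * (if P s then q s else 0)
        - r * (if Q s then q s else 0) + r ^ 2 * q s := by
    intro s
    by_cases hP : P s <;> by_cases hQ : Q s <;> simp [hP, hQ] <;> ring
  simp only [hpoint, Finset.sum_add_distrib, Finset.sum_sub_distrib, ← Finset.mul_sum, hq1,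
    mul_one]

lemma sum_mul_card_filter_sub_sq_le (hq1 : ∑ s, q s = 1) {ι : Type*} (M : Finset ι)
    (A : ι → S → Prop) [∀ e, DecidablePred (A e)] (r : ℝ)
    (hA : ∀ e ∈ M, (∑ s, if A e s then q s else 0) = r)
    (hAA : ∀ e ∈ M, ∀ f ∈ M, e ≠ f → (∑ s, if A e s ∧ A f s then q s else 0) = r ^ 2) :
    ∑ s, q s * ((#(M.filter (A · s)) : ℝ) - #M * r) ^ 2 ≤ #M * r := by
  -- Pairwise independence makes the covariances vanish.
  have hcov : ∀ e ∈ M, ∀ f ∈ M,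
      ∑ s, q s * (((if A e s then 1 else 0) - r) * ((if A f s then 1 else 0) - r)) =
        if e = f then r - r ^ 2 else 0 := by
    intro e he f hf
    rw [sum_mul_centered_indicators q hq1]
    split_ifs with hef
    · subst hef
      simp only [and_self, hA e he]
      ring
    · rw [hAA e he f hf hef, hA e he, hA f hf]
      ring
  calc ∑ s, q s * ((#(M.filter (A · s)) : ℝ) - #M * r) ^ 2
      = ∑ s, ∑ e ∈ M, ∑ f ∈ M,
          q s * (((if A e s then 1 else 0) - r) * ((if A f s then 1 else 0) - r)) := by
        refine Finset.sum_congr rfl fun s _ => ?_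
        rw [Finset.natCast_card_filter, ← nsmul_eq_mul, ← Finset.sum_const,
          ← Finset.sum_sub_distrib, sq, Finset.sum_mul_sum, Finset.mul_sum]
        simp only [Finset.mul_sum]
    _ = ∑ e ∈ M, ∑ f ∈ M, if e = f then r - r ^ 2 else 0 := by
        rw [Finset.sum_comm]
        refine Finset.sum_congr rfl fun e he => ?_
        rw [Finset.sum_comm]
        exact Finset.sum_congr rfl fun f hf => hcov e he f hf
    _ = #M * (r - r ^ 2) := by simp [Finset.sum_ite_eq, mul_sub]
    _ ≤ #M * r := by gcongr; exact sub_le_self r (sq_nonneg r)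

lemma sum_ite_lt_half_le_of_sum_mul_sub_sq_le (hq : ∀ s, 0 ≤ q s) {X Y : S → ℝ}
    (hXY : ∀ s, X s ≤ Y s) {μ : ℝ} (hμ : 0 < μ) (hvar : ∑ s, q s * (X s - μ) ^ 2 ≤ μ) :
    (∑ s, if Y s < μ / 2 then q s else 0) ≤ 4 / μ := by
  have hcheb : (∑ s, if Y s < μ / 2 then q s else 0) * (μ / 2) ^ 2 ≤ μ := by
    refine le_trans ?_ hvar
    rw [Finset.sum_mul]
    refine Finset.sum_le_sum fun s _ => ?_
    split_ifs with hY
    · have hX : X s < μ / 2 := (hXY s).trans_lt hY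
      exact mul_le_mul_of_nonneg_left (by nlinarith) (hq s)
    · rw [zero_mul]
      exact mul_nonneg (hq s) (sq_nonneg _)
  calc (∑ s, if Y s < μ / 2 then q s else 0) ≤ μ / (μ / 2) ^ 2 :=
        (le_div_iff₀ (by positivity)).2 hcheb
    _ = 4 / μ := by field_simp; ring

end WeightedSums

section Matchings

variable {V : Type*} {G : SimpleGraph V} {M : Finset (Sym2 V)}

lemma IsMatchingIn.subset {M' : Finset (Sym2 V)} (hM : IsMatchingIn G M) (h : M' ⊆ M) :
    IsMatchingIn G M' :=
  ⟨fun e he => hM.1 e (h he), fun e he f hf => hM.2 e (h he) f (h hf)⟩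

lemma IsMatchingIn.card_toFinset [DecidableEq V] {e : Sym2 V} (hM : IsMatchingIn G M)
    (he : e ∈ M) : #e.toFinset = 2 :=
  Sym2.card_toFinset_of_not_isDiag e (G.not_isDiag_of_mem_edgeSet (hM.1 e he))

lemma IsMatchingIn.disjoint_toFinset [DecidableEq V] {e f : Sym2 V} (hM : IsMatchingIn G M)
    (he : e ∈ M) (hf : f ∈ M) (hef : e ≠ f) : Disjoint e.toFinset f.toFinset :=
  Finset.disjoint_left.2 fun v hve hvf =>
    hM.2 e he f hf hef v (Sym2.mem_toFinset.1 hve) (Sym2.mem_toFinset.1 hvf)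

lemma exists_isMatchingIn_card_eq_matchNum [Fintype V] (G : SimpleGraph V) :
    ∃ M : Finset (Sym2 V), IsMatchingIn G M ∧ #M = matchNum G := by
  refine Nat.sSup_mem (s := {k | ∃ M : Finset (Sym2 V), IsMatchingIn G M ∧ #M = k}) ?_ ?_
  · exact ⟨0, ∅, ⟨by simp, by simp⟩, rfl⟩
  · exact ⟨Fintype.card (Sym2 V), by rintro k ⟨M, -, rfl⟩; exact Finset.card_le_univ M⟩

lemma card_le_matchNumOn [Fintype V] {A : Set V} (hM : IsMatchingIn G M)
    (hA : ∀ e ∈ M, ∀ v ∈ e, v ∈ A) : #M ≤ matchNumOn G A :=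
  le_csSup ⟨Fintype.card (Sym2 V), by rintro k ⟨N, -, -, rfl⟩; exact Finset.card_le_univ N⟩
    ⟨M, hM, hA, rfl⟩

end Matchings

section VertexSampling

variable {S V : Type*} [Fintype S] [DecidableEq V] {q : S → ℝ} {Z : S → V → Bool} {pr : ℝ}
  -- Instance-generic: on `Fin n` the instance found is `Nat.decidableForallFin`, not the
  -- `Finset` one.
  [∀ s (T : Finset V), Decidable (∀ v ∈ T, Z s v = true)] {G : SimpleGraph V}
  {M : Finset (Sym2 V)}
  (hall : ∀ T : Finset V, #T ≤ 4 → (∑ s, if ∀ v ∈ T, Z s v = true then q s else 0) = pr ^ #T)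
include hall

lemma IsMatchingIn.prob_edge_sampled (hM : IsMatchingIn G M) {e : Sym2 V} (he : e ∈ M) :
    (∑ s, if ∀ v ∈ e.toFinset, Z s v = true then q s else 0) = pr ^ 2 := by
  rw [hall _ (by rw [hM.card_toFinset he]; norm_num), hM.card_toFinset he]

lemma IsMatchingIn.prob_two_edges_sampled (hM : IsMatchingIn G M) {e f : Sym2 V} (he : e ∈ M)
    (hf : f ∈ M) (hef : e ≠ f) :
    (∑ s, if (∀ v ∈ e.toFinset, Z s v = true) ∧ (∀ v ∈ f.toFinset, Z s v = true) then q s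
      else 0) = (pr ^ 2) ^ 2 := by
  have hcard : #(e.toFinset ∪ f.toFinset) = 4 := by
    rw [Finset.card_union_of_disjoint (hM.disjoint_toFinset he hf hef), hM.card_toFinset he,
      hM.card_toFinset hf]
  simp only [← Finset.forall_mem_union]
  rw [hall _ hcard.le, hcard]
  ring

lemma IsMatchingIn.sum_mul_card_sampled_sub_sq_le (hq1 : ∑ s, q s = 1)
    (hM : IsMatchingIn G M) :
    ∑ s, q s * ((#(M.filter fun e => ∀ v ∈ e.toFinset, Z s v = true) : ℝ) - #M * pr ^ 2) ^ 2
      ≤ #M * pr ^ 2 :=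
  sum_mul_card_filter_sub_sq_le q hq1 M (fun e s => ∀ v ∈ e.toFinset, Z s v = true) (pr ^ 2)
    (fun _ he => hM.prob_edge_sampled hall he)
    (fun _ he _ hf hef => hM.prob_two_edges_sampled hall he hf hef)

end VertexSampling

/-- Lemma 8.1, Part 2: there are constants `C₀, C₁ > 0` such that for any graph `G` on
`n ≥ 2` vertices with `opt(G) ≥ C₀·α²` and `α ≥ log n`, sampling each vertex four-wise
independently with probability `pr = (log n)/α` yields an induced subgraph whose
maximum matching size is below `(log² n / (2α²))·opt(G)` with probability at most
`C₁ / log² n` (i.e. the bound holds with probability `1 - o(1/log n)`). -/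
theorem stmt12 : ∃ C₀ C₁ : ℝ, 0 < C₀ ∧ 0 < C₁ ∧
    ∀ (n : ℕ) (α : ℝ) (G : SimpleGraph (Fin n))
      (S : Type) (_ : Fintype S) (qd : S → ℝ) (Z : S → Fin n → Bool) (pr : ℝ),
      2 ≤ n → Real.log n ≤ α →
      (∀ s, 0 ≤ qd s) → (∑ s, qd s = 1) →
      pr = Real.log n / α →
      (∀ T : Finset (Fin n), T.card ≤ 4 → ∀ f : Fin n → Bool,
        (∑ s, if ∀ v ∈ T, Z s v = f v then qd s else 0)
          = ∏ v ∈ T, (if f v then pr else 1 - pr)) →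
      C₀ * α ^ 2 ≤ (matchNum G : ℝ) →
      (∑ s, if (matchNumOn G {v | Z s v = true} : ℝ)
            < (Real.log n) ^ 2 / (2 * α ^ 2) * (matchNum G : ℝ) then qd s else 0)
        ≤ C₁ / (Real.log n) ^ 2 := by
  refine ⟨1, 4, one_pos, four_pos, ?_⟩
  intro n α G S _ qd Z pr hn hα hq0 hq1 hpr hfour hopt
  have hL : 0 < Real.log n := Real.log_pos (by exact_mod_cast hn)
  have hαpos : 0 < α := hL.trans_le hα
  have hall : ∀ T : Finset (Fin n), #T ≤ 4 →
      (∑ s, if ∀ v ∈ T, Z s v = true then qd s else 0) = pr ^ #T := fun T hT => by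
    simpa using hfour T hT fun _ => true
  obtain ⟨M, hM, hMcard⟩ := exists_isMatchingIn_card_eq_matchNum G
  have hmean : Real.log n ^ 2 ≤ matchNum G * pr ^ 2 := by
    rw [hpr, div_pow, mul_div, le_div_iff₀ (by positivity)]
    nlinarith
  have hthreshold : Real.log n ^ 2 / (2 * α ^ 2) * matchNum G = matchNum G * pr ^ 2 / 2 := by
    rw [hpr]
    field_simp
  have hsampled : ∀ s, (#(M.filter fun e => ∀ v ∈ e.toFinset, Z s v = true) : ℝ)
      ≤ matchNumOn G {v | Z s v = true} := fun s => by
    refine Nat.cast_le.2 (card_le_matchNumOn (hM.subset (Finset.filter_subset _ _)) ?_)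
    intro e he v hv
    exact (Finset.mem_filter.1 he).2 v (Sym2.mem_toFinset.2 hv)
  have hvar := hM.sum_mul_card_sampled_sub_sq_le hall hq1
  rw [hMcard] at hvar
  rw [hthreshold]
  calc _ ≤ 4 / (matchNum G * pr ^ 2) :=
        sum_ite_lt_half_le_of_sum_mul_sub_sq_le qd hq0 hsampled
          ((pow_pos hL 2).trans_le hmean) hvar
    _ ≤ 4 / Real.log n ^ 2 := by gcongr
end
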